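/- Let ω be a primitive m-th root of unity (m ≥ 2). Then H_n(ω, ω^2, ..., ω^{m-1}) = ∏_{j < n, m ∤ j} (1 - q^j) if m divides n, and equals 0 otherwise. Here H_n is the Rogers-Szegő polynomial in m-1 variables. -/

import Mathlib

/-- `(q)_n = (1-q)(1-q^2)⋯(1-q^n)`, with `(q)_0 = 1`. -/
noncomputable def qPoch (q : ℂ) (n : ℕ) : ℂ :=
  ∏ j ∈ Finset.range n, (1 - q ^ (j + 1))

/-- The Rogers-Szegő polynomial in `m-1` variables. -/
noncomputable def rogersSzegoMV (q : ℂ) (m n : ℕ) (t : Fin (m - 1) → ℂ) : ℂ :=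
  ∑ k ∈ Finset.Nat.antidiagonalTuple m n,
    (qPoch q n / ∏ i, qPoch q (k i)) *
      ∏ i : Fin (m - 1), t i ^ k (Fin.castLE (Nat.sub_le m 1) i)

/-! Write `e_q(x) = ∑ xⁿ / (q)ₙ`. The `q`-multinomial theorem says that `∑ Hₙ(t) xⁿ / (q)ₙ` is
`e_q(x) ∏ e_q(tᵢ x)`, so at `tᵢ = ωⁱ` it is `P(x) = ∏_{i=1}^{m} e_q(ωⁱ x)`. From
`e_q(q x) = (1 - x) e_q(x)` and `∏ (1 - ωⁱ x) = 1 - xᵐ` we get `P(q x) = (1 - xᵐ) P(x)`, whose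
coefficients give `P(x) = ∑ x^{mk} / (qᵐ; qᵐ)_k`. Finally `(q)_{mk} / (qᵐ; qᵐ)_k` is the product of
the factors `1 - qʲ` with `m ∤ j`. -/

open Finset PowerSeries

lemma one_sub_pow_ne_zero {q : ℂ} (hq : ∀ j : ℕ, 1 ≤ j → q ^ j ≠ 1) {j : ℕ} (hj : 1 ≤ j) :
    1 - q ^ j ≠ 0 :=
  sub_ne_zero.2 (hq j hj).symm

@[simp]
lemma qPoch_zero (q : ℂ) : qPoch q 0 = 1 := prod_range_zero _

lemma qPoch_succ (q : ℂ) (n : ℕ) : qPoch q (n + 1) = qPoch q n * (1 - q ^ (n + 1)) :=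
  prod_range_succ _ _

lemma qPoch_ne_zero {q : ℂ} (hq : ∀ j : ℕ, 1 ≤ j → q ^ j ≠ 1) (n : ℕ) : qPoch q n ≠ 0 :=
  prod_ne_zero_iff.2 fun j _ => one_sub_pow_ne_zero hq (Nat.succ_pos j)

lemma qPoch_pow_ne_zero {q : ℂ} (hq : ∀ j : ℕ, 1 ≤ j → q ^ j ≠ 1) {m : ℕ} (hm : 0 < m) (k : ℕ) :
    qPoch (q ^ m) k ≠ 0 :=
  qPoch_ne_zero (fun j hj => by rw [← pow_mul]; exact hq _ (Nat.mul_pos hm hj)) k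

lemma prod_range_mul_succ_eq_prod_filter_not_dvd_mul {M : Type*} [CommMonoid M] (f : ℕ → M)
    {m : ℕ} (hm : 0 < m) (k : ℕ) :
    ∏ j ∈ range (m * k), f (j + 1) =
      (∏ j ∈ range (m * k) with ¬ m ∣ j, f j) * ∏ i ∈ range k, f (m * (i + 1)) := by
  obtain ⟨m, rfl⟩ : ∃ m', m = m' + 1 := ⟨m - 1, by omega⟩
  induction k with
  | zero => simp
  | succ k ih =>
    have hblock :
        ∏ r ∈ range (m + 1), (if ¬ m + 1 ∣ (m + 1) * k + r then f ((m + 1) * k + r) else 1) =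
          ∏ r ∈ range m, f ((m + 1) * k + r + 1) := by
      rw [prod_range_succ', add_zero, if_neg (not_not.2 (dvd_mul_right _ _)), mul_one]
      refine prod_congr rfl fun r hr => if_pos ?_
      rw [Nat.dvd_add_right (dvd_mul_right _ _)]
      exact Nat.not_dvd_of_pos_of_lt r.succ_pos (by simpa using hr)
    rw [prod_filter] at ih ⊢
    rw [Nat.mul_succ, prod_range_add (fun j => f (j + 1)),
      prod_range_add (fun j => if ¬ m + 1 ∣ j then f j else 1), ih, hblock, prod_range_succ _ m,
      prod_range_succ _ k, show (m + 1) * (k + 1) = (m + 1) * k + m + 1 by ring]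
    ac_rfl

lemma qPoch_mul_eq_prod_filter_not_dvd_mul (q : ℂ) {m : ℕ} (hm : 0 < m) (k : ℕ) :
    qPoch q (m * k) =
      (∏ j ∈ range (m * k) with ¬ m ∣ j, (1 - q ^ j)) * qPoch (q ^ m) k := by
  simp only [qPoch, ← pow_mul]
  exact prod_range_mul_succ_eq_prod_filter_not_dvd_mul (fun j => 1 - q ^ j) hm k

noncomputable def qExp (q a : ℂ) : ℂ⟦X⟧ := mk fun n => a ^ n / qPoch q n

@[simp]
lemma coeff_qExp (q a : ℂ) (n : ℕ) : coeff n (qExp q a) = a ^ n / qPoch q n := coeff_mk _ _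

@[simp]
lemma constantCoeff_qExp (q a : ℂ) : constantCoeff (qExp q a) = 1 := by
  simp [← coeff_zero_eq_constantCoeff_apply]

lemma qExp_mul_one_sub {q : ℂ} (hq : ∀ j : ℕ, 1 ≤ j → q ^ j ≠ 1) (a : ℂ) :
    qExp q a * (1 - C a * X) = rescale q (qExp q a) := by
  ext (_ | n)
  · simp
  · have hn := one_sub_pow_ne_zero hq (Nat.succ_pos n)
    have := qPoch_ne_zero hq n
    rw [mul_sub, mul_one, map_sub, mul_left_comm, coeff_C_mul, coeff_succ_mul_X, coeff_rescale,
      coeff_qExp, coeff_qExp, qPoch_succ]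
    field_simp
    ring

lemma rescale_prod_qExp {q : ℂ} (hq : ∀ j : ℕ, 1 ≤ j → q ^ j ≠ 1) {ι : Type*} (s : Finset ι)
    (a : ι → ℂ) :
    rescale q (∏ i ∈ s, qExp q (a i)) =
      (∏ i ∈ s, qExp q (a i)) * ∏ i ∈ s, (1 - C (a i) * X) := by
  simp only [map_prod, ← qExp_mul_one_sub hq, prod_mul_distrib]

lemma coeff_prod_qExp (q : ℂ) {m : ℕ} (a : Fin m → ℂ) (n : ℕ) :
    coeff n (∏ i, qExp q (a i)) =
      ∑ k ∈ Nat.antidiagonalTuple m n, ∏ i, a i ^ k i / qPoch q (k i) := by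
  classical
  rw [coeff_prod]
  refine sum_equiv Finsupp.equivFunOnFinite (fun l => ?_) fun l _ => ?_
  · simp [Nat.mem_antidiagonalTuple]
  · simp

lemma rogersSzegoMV_succ_eq_qPoch_mul_coeff (q : ℂ) {m : ℕ} (a : Fin (m + 1) → ℂ)
    (ha : a (Fin.last m) = 1) (n : ℕ) :
    rogersSzegoMV q (m + 1) n (fun i => a i.castSucc) =
      qPoch q n * coeff n (∏ i, qExp q (a i)) := by
  rw [coeff_prod_qExp, mul_sum, rogersSzegoMV]
  refine sum_congr rfl fun k _ => ?_
  rw [prod_div_distrib, Fin.prod_univ_castSucc (fun i => a i ^ k i), ha, one_pow, mul_one,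
    mul_div_assoc', div_mul_eq_mul_div]
  -- `Fin.castLE _ i` and `i.castSucc` are definitionally equal
  rfl

lemma IsPrimitiveRoot.prod_one_sub_pow_succ_mul {R : Type*} [CommRing R] [IsDomain R] {ω : R}
    {m : ℕ} (hω : IsPrimitiveRoot ω m) (hm : 0 < m) (x : R) :
    ∏ i ∈ range m, (1 - ω ^ (i + 1) * x) = 1 - x ^ m := by
  have h := congrArg (Polynomial.eval 1)
    (X_pow_sub_C_eq_prod hω hm (α := ω * x) (by rw [mul_pow, hω.pow_eq_one, one_mul]))
  simpa [Polynomial.eval_prod, pow_succ, mul_assoc] using h.symm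

lemma rescale_prod_qExp_pow_succ {q : ℂ} (hq : ∀ j : ℕ, 1 ≤ j → q ^ j ≠ 1) {ω : ℂ} {m : ℕ}
    (hω : IsPrimitiveRoot ω m) (hm : 0 < m) :
    rescale q (∏ i : Fin m, qExp q (ω ^ ((i : ℕ) + 1))) =
      (∏ i : Fin m, qExp q (ω ^ ((i : ℕ) + 1))) * (1 - X ^ m) := by
  rw [rescale_prod_qExp hq, Fin.prod_univ_eq_prod_range (fun i => 1 - C (ω ^ (i + 1)) * X),
    ← (hω.map_of_injective (C_injective (R := ℂ))).prod_one_sub_pow_succ_mul hm X]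
  simp

section FunctionalEquation

variable {q : ℂ} {m : ℕ} {P : ℂ⟦X⟧}

lemma coeff_mul_one_sub_pow_of_rescale_eq (hP : rescale q P = P * (1 - X ^ m)) (n : ℕ) :
    coeff n P * (1 - q ^ n) = if m ≤ n then coeff (n - m) P else 0 := by
  have h := congrArg (coeff n) hP
  rw [coeff_rescale, mul_sub, mul_one, map_sub, coeff_mul_X_pow'] at h
  linear_combination -h

lemma coeff_eq_zero_of_rescale_eq (hq : ∀ j : ℕ, 1 ≤ j → q ^ j ≠ 1) (hm : 0 < m)
    (hP : rescale q P = P * (1 - X ^ m)) {n : ℕ} (hn : ¬ m ∣ n) : coeff n P = 0 := by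
  induction n using Nat.strong_induction_on with
  | _ n ih =>
    have hrec := coeff_mul_one_sub_pow_of_rescale_eq hP n
    have hn0 : 1 ≤ n := Nat.pos_of_ne_zero fun h => hn (h ▸ dvd_zero m)
    refine (mul_eq_zero.1 (hrec.trans ?_)).resolve_right (one_sub_pow_ne_zero hq hn0)
    split_ifs with hmn
    · exact ih (n - m) (by omega) fun h => hn (by simpa [hmn] using Nat.dvd_add h (dvd_refl m))
    · rfl

lemma coeff_eq_div_qPoch_of_rescale_eq (hq : ∀ j : ℕ, 1 ≤ j → q ^ j ≠ 1) (hm : 0 < m)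
    (hP : rescale q P = P * (1 - X ^ m)) (k : ℕ) :
    coeff (m * k) P = coeff 0 P / qPoch (q ^ m) k := by
  induction k with
  | zero => simp
  | succ k ih =>
    have hrec := coeff_mul_one_sub_pow_of_rescale_eq hP (m * (k + 1))
    have hne := one_sub_pow_ne_zero hq (Nat.mul_pos hm k.succ_pos)
    rw [if_pos (Nat.le_mul_of_pos_right m k.succ_pos), show m * (k + 1) - m = m * k by
      rw [Nat.mul_succ, Nat.add_sub_cancel], ih] at hrec
    rw [qPoch_succ, ← pow_mul, ← div_div, ← hrec, mul_div_cancel_right₀ _ hne]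

end FunctionalEquation

/-- For `ω` a primitive `m`-th root of unity (`m ≥ 2`) and a generic parameter `q`,
`H_n(ω, ω², …, ω^{m-1}) = ∏_{j<n, m∤j} (1 - q^j)` if `m ∣ n`, and `0` otherwise. -/
theorem rogersSzegoMV_at_roots_of_unity (m n : ℕ) (hm : 2 ≤ m) (ω : ℂ)
    (hω : IsPrimitiveRoot ω m) (q : ℂ) (hq : ∀ j : ℕ, 1 ≤ j → q ^ j ≠ 1) :
    rogersSzegoMV q m n (fun i => ω ^ ((i : ℕ) + 1)) =
      if m ∣ n then
        ∏ j ∈ (Finset.range n).filter (fun j => ¬ m ∣ j), (1 - q ^ j)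
      else 0 := by
  obtain ⟨m, rfl⟩ : ∃ m', m = m' + 1 := ⟨m - 1, by omega⟩
  set P := ∏ i : Fin (m + 1), qExp q (ω ^ ((i : ℕ) + 1))
  have hP : rescale q P = P * (1 - X ^ (m + 1)) := rescale_prod_qExp_pow_succ hq hω m.succ_pos
  have hgen : rogersSzegoMV q (m + 1) n (fun i => ω ^ ((i : ℕ) + 1)) = qPoch q n * coeff n P :=
    rogersSzegoMV_succ_eq_qPoch_mul_coeff q (fun i => ω ^ ((i : ℕ) + 1)) hω.pow_eq_one n
  rw [hgen]
  split_ifs with hdvd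
  · obtain ⟨k, rfl⟩ := hdvd
    have hP0 : coeff 0 P = 1 := by simp [P]
    rw [coeff_eq_div_qPoch_of_rescale_eq hq m.succ_pos hP, hP0,
      qPoch_mul_eq_prod_filter_not_dvd_mul q m.succ_pos, mul_assoc,
      mul_one_div_cancel (qPoch_pow_ne_zero hq m.succ_pos k), mul_one]
  · rw [coeff_eq_zero_of_rescale_eq hq m.succ_pos hP hdvd, mul_zero]
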